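/- arXiv:0706.1808 — 4 statements merged into one kernel-verified Lean document; each statement's English description precedes it below -/
import Mathlib

section
/- For every n-dimensional centrally symmetric convex body C, γ(C) = ρ(C) + 1, where γ(C) is the smallest r such that some translative packing C+X satisfies E^n = rC + X, and ρ(C) is the largest r such that every translative packing C+X admits a translate of rC with interior disjoint from all translates in C+X. -/
open Pointwise Set

noncomputable section

/-- `C + X` is a translative packing: the translates have pairwise disjoint interiors. -/
def IsPacking {V : Type*} [NormedAddCommGroup V] [NormedSpace ℝ V] (C X : Set V) : Prop :=
  X.Pairwise fun x y => Disjoint (interior (C + {x})) (interior (C + {y}))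

/-- `D + X` covers the whole space. -/
def IsCovering {V : Type*} [NormedAddCommGroup V] [NormedSpace ℝ V] (D X : Set V) : Prop :=
  ⋃ x ∈ X, (D + {x}) = Set.univ

/-- γ(C): the smallest `r > 0` such that some translative packing `C + X`
satisfies `ℝⁿ = rC + X`. -/
def gamma {V : Type*} [NormedAddCommGroup V] [NormedSpace ℝ V] (C : Set V) : ℝ :=
  sInf {r : ℝ | 0 < r ∧ ∃ X : Set V, IsPacking C X ∧ IsCovering (r • C) X}

/-- ρ(C): the largest `r > 0` such that every translative packing `C + X` admits a
translate of `rC` whose interior is disjoint from all translates `C + x`, `x ∈ X`. -/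
def rho {V : Type*} [NormedAddCommGroup V] [NormedSpace ℝ V] (C : Set V) : ℝ :=
  sSup {r : ℝ | 0 < r ∧ ∀ X : Set V, IsPacking C X →
    ∃ y : V, ∀ x ∈ X, Disjoint (interior (r • C + {y})) (C + {x})}

/-!
Let `C` be a symmetric convex body.
* A maximal packing `C + X` is covered by `(C - C) + X = 2C + X`.
* If `sC + X` covers with `s < 1`, the disjoint open sets `int C + x` cover the connected space,
  so `C` would be the whole space.
* If `sC + X` covers and `int (rC + y)` misses every `C + x`, write `y = x + s c` with `c ∈ C`:
  for `s - 1 < r` the point `y - (s - 1) c` lies in both, so `r + 1 ≤ s`.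
* If every `int (rC + y)` meets some `C + x`, then `y - x ∈ rC + C = (r + 1) C`.
The last two points say that `r + 1` bounds every covering radius from below when `rC` always
fits into a hole, and is a covering radius when it does not; hence `γ = ρ + 1`.
-/

section Module

variable {R M : Type*} [Ring R] [AddCommGroup M] [Module R M] {C : Set M}

lemma smul_set_eq_neg_of_eq_neg (hsymm : C = -C) (r : R) : r • C = -(r • C) := by
  conv_lhs => rw [hsymm]
  exact smul_set_neg r C

end Module

section TopologicalAddGroup

variable {G : Type*} [AddGroup G]

lemma mem_add_singleton_iff_sub_mem {S : Set G} {x p : G} : p ∈ S + {x} ↔ p - x ∈ S := by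
  simp [Set.add_singleton, sub_eq_add_neg]

variable [TopologicalSpace G] [IsTopologicalAddGroup G]

lemma interior_add_singleton (S : Set G) (x : G) : interior (S + {x}) = interior S + {x} := by
  simp only [Set.add_singleton]
  exact ((Homeomorph.addRight x).image_interior S).symm

lemma interior_neg (S : Set G) : interior (-S) = -interior S := by
  simpa using ((Homeomorph.neg G).image_interior S).symm

end TopologicalAddGroup

section ConvexBody

variable {V : Type*} [NormedAddCommGroup V] [NormedSpace ℝ V] {C : Set V}

lemma Convex.zero_mem_interior_of_eq_neg (hconv : Convex ℝ C) (hsymm : C = -C)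
    (hint : (interior C).Nonempty) : (0 : V) ∈ interior C := by
  obtain ⟨v, hv⟩ := hint
  have hv' : -v ∈ interior C := by rwa [← Set.mem_neg, ← interior_neg, ← hsymm]
  simpa using hconv.interior hv hv' one_half_pos.le one_half_pos.le (add_halves 1)

lemma zero_mem_interior_smul (h0 : (0 : V) ∈ interior C) {r : ℝ} (hr : r ≠ 0) :
    (0 : V) ∈ interior (r • C) := by
  rw [interior_smul₀ hr]
  simpa using smul_mem_smul_set (a := r) h0

lemma Convex.smul_subset_interior_smul (hconv : Convex ℝ C) (h0 : (0 : V) ∈ interior C)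
    {t r : ℝ} (ht : 0 ≤ t) (htr : t < r) : t • C ⊆ interior (r • C) := by
  rcases ht.eq_or_lt with rfl | ht
  · exact (zero_smul_set_subset C).trans
      (singleton_subset_iff.2 (zero_mem_interior_smul h0 htr.ne'))
  have hdil : AffineMap.homothety (0 : V) (r / t) '' (t • C) = r • C := by
    have : ⇑(AffineMap.homothety (0 : V) (r / t)) = fun p => (r / t) • p := by
      ext p; simp [AffineMap.homothety_apply]
    rw [this, Set.image_smul, smul_smul, div_mul_cancel₀ _ ht.ne']
  simpa only [hdil] using (hconv.smul t).subset_interior_image_homothety_of_one_lt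
    (zero_mem_interior_smul h0 ht.ne') (r / t) ((one_lt_div ht).2 htr)

lemma Convex.sub_self_eq_two_smul (hconv : Convex ℝ C) (hsymm : C = -C) :
    C - C = (2 : ℝ) • C := by
  calc C - C = C + C := by rw [sub_eq_add_neg, ← hsymm]
    _ = (1 + 1 : ℝ) • C := by rw [hconv.add_smul zero_le_one zero_le_one, one_smul]
    _ = (2 : ℝ) • C := by norm_num

end ConvexBody

section Packing

variable {V : Type*} [NormedAddCommGroup V] [NormedSpace ℝ V] {C X : Set V}

lemma exists_maximal_isPacking (C : Set V) : ∃ X, Maximal (IsPacking C) X :=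
  zorn_subset {X | IsPacking C X} fun c hc hchain =>
    ⟨⋃₀ c, (hchain.pairwiseDisjoint_sUnion _).2 fun _ hs => hc hs,
      fun _ => subset_sUnion_of_mem⟩

lemma isCovering_sub_self_of_maximal (hX : Maximal (IsPacking C) X) (hC : C.Nonempty) :
    IsCovering (C - C) X := by
  refine eq_univ_of_forall fun y => mem_iUnion₂.2 ?_
  by_cases hy : y ∈ X
  · obtain ⟨c, hc⟩ := hC
    exact ⟨y, hy, mem_add_singleton_iff_sub_mem.2 (by simpa using sub_mem_sub hc hc)⟩
  obtain ⟨b, hb, hyb⟩ : ∃ b ∈ X, ¬Disjoint (interior (C + {y})) (interior (C + {b})) := by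
    by_contra! h
    exact hy (hX.mem_of_prop_insert (hX.prop.insert fun b hb _ => ⟨h b hb, (h b hb).symm⟩))
  obtain ⟨p, hpy, hpb⟩ := not_disjoint_iff.1 hyb
  rw [interior_add_singleton, mem_add_singleton_iff_sub_mem] at hpy hpb
  refine ⟨b, hb, mem_add_singleton_iff_sub_mem.2 ?_⟩
  rw [← sub_sub_sub_cancel_left b y p]
  exact sub_mem_sub (interior_subset hpb) (interior_subset hpy)

lemma IsPacking.eq_univ_of_isCovering_interior (hX : IsPacking C X)
    (hcov : IsCovering (interior C) X) : C = univ := by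
  have hmem (y : V) : ∃ x ∈ X, y ∈ interior (C + {x}) := by
    obtain ⟨x, hx, hyx⟩ := mem_iUnion₂.1 (hcov ▸ mem_univ y)
    exact ⟨x, hx, by rwa [interior_add_singleton]⟩
  obtain ⟨x₀, hx₀, h0⟩ := hmem 0
  have hclopen : IsClopen (interior (C + {x₀})) := by
    refine ⟨isOpen_compl_iff.1 (isOpen_iff_forall_mem_open.2 fun y hy => ?_), isOpen_interior⟩
    obtain ⟨x, hx, hyx⟩ := hmem y
    have hne : x ≠ x₀ := by rintro rfl; exact hy hyx
    exact ⟨_, (hX hx hx₀ hne).subset_compl_right, isOpen_interior, hyx⟩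
  refine eq_univ_of_forall fun z => ?_
  have hz := hclopen.eq_univ ⟨0, h0⟩ ▸ mem_univ (z + x₀)
  rw [interior_add_singleton, mem_add_singleton_iff_sub_mem, add_sub_cancel_right] at hz
  exact interior_subset hz

lemma one_le_of_isPacking_of_isCovering (hconv : Convex ℝ C) (h0 : (0 : V) ∈ interior C)
    (hC : C ≠ univ) (hX : IsPacking C X) {s : ℝ} (hs : 0 ≤ s) (hcov : IsCovering (s • C) X) :
    1 ≤ s := by
  by_contra! hs1
  refine hC (hX.eq_univ_of_isCovering_interior (eq_univ_of_univ_subset ?_))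
  rw [← hcov]
  exact iUnion₂_mono fun x _ => add_subset_add_right <| by
    simpa using hconv.smul_subset_interior_smul h0 hs hs1

lemma add_one_le_of_isCovering_of_disjoint (hconv : Convex ℝ C) (hsymm : C = -C)
    (h0 : (0 : V) ∈ interior C) {r s : ℝ} {y : V} (hs : 1 ≤ s) (hcov : IsCovering (s • C) X)
    (hy : ∀ x ∈ X, Disjoint (interior (r • C + {y})) (C + {x})) : r + 1 ≤ s := by
  by_contra! hsr
  obtain ⟨x, hx, hyx⟩ := mem_iUnion₂.1 (hcov ▸ mem_univ y)
  obtain ⟨c, hc, hcy⟩ := mem_add_singleton_iff_sub_mem.1 hyx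
  have h_hole : y - (s - 1) • c ∈ interior (r • C + {y}) := by
    rw [interior_add_singleton, mem_add_singleton_iff_sub_mem, sub_sub_cancel_left,
      smul_set_eq_neg_of_eq_neg hsymm, interior_neg, mem_neg, neg_neg]
    exact hconv.smul_subset_interior_smul h0 (by linarith) (by linarith) (smul_mem_smul_set hc)
  have h_body : y - (s - 1) • c ∈ C + {x} := by
    rwa [mem_add_singleton_iff_sub_mem, sub_right_comm, ← hcy, ← sub_smul, sub_sub_cancel,
      one_smul]
  exact disjoint_left.1 (hy x hx) h_hole h_body

lemma isCovering_add_one_smul_of_not_disjoint (hconv : Convex ℝ C) (hsymm : C = -C) {r : ℝ}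
    (hr : 0 ≤ r) (h : ∀ y, ∃ x ∈ X, ¬Disjoint (interior (r • C + {y})) (C + {x})) :
    IsCovering ((r + 1) • C) X := by
  refine eq_univ_of_forall fun y => ?_
  obtain ⟨x, hx, hyx⟩ := h y
  obtain ⟨p, hpy, hpx⟩ := not_disjoint_iff.1 hyx
  rw [interior_add_singleton, mem_add_singleton_iff_sub_mem] at hpy
  rw [mem_add_singleton_iff_sub_mem] at hpx
  have hyp : y - p ∈ r • C := by
    rw [smul_set_eq_neg_of_eq_neg hsymm, mem_neg, neg_sub]
    exact interior_subset hpy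
  refine mem_iUnion₂.2 ⟨x, hx, mem_add_singleton_iff_sub_mem.2 ?_⟩
  rw [hconv.add_smul hr zero_le_one, one_smul, ← sub_add_sub_cancel y p x]
  exact add_mem_add hyp hpx

end Packing

lemma sInf_eq_sSup_add {A B : Set ℝ} {a : ℝ} (hA : A.Nonempty) (haA : ∀ s ∈ A, a ≤ s)
    (hB : ∀ r ∈ B, 0 ≤ r) (hBA : ∀ r ∈ B, ∀ s ∈ A, r + a ≤ s)
    (hAB : ∀ r, 0 < r → r ∉ B → r + a ∈ A) : sInf A = sSup B + a := by
  obtain ⟨s₀, hs₀⟩ := hA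
  have hBbdd : BddAbove B := ⟨s₀ - a, fun r hr => by linarith [hBA r hr s₀ hs₀]⟩
  have hB₀ : 0 ≤ sSup B := Real.sSup_nonneg hB
  refine le_antisymm (le_of_forall_pos_le_add fun e he => ?_) ?_
  · have hnB : sSup B + e ∉ B := fun h => by linarith [le_csSup hBbdd h]
    calc sInf A ≤ sSup B + e + a := csInf_le ⟨a, haA⟩ (hAB _ (by linarith) hnB)
      _ = sSup B + a + e := by ring
  · have hle : sSup B ≤ sInf A - a :=
      Real.sSup_le (fun r hr => by linarith [le_csInf ⟨s₀, hs₀⟩ (hBA r hr)])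
        (by linarith [le_csInf ⟨s₀, hs₀⟩ haA])
    linarith

theorem gamma_eq_rho_add_one (n : ℕ) (hn : 0 < n) (C : Set (EuclideanSpace ℝ (Fin n)))
    (hcpt : IsCompact C) (hconv : Convex ℝ C) (hint : (interior C).Nonempty)
    (hsymm : C = -C) :
    gamma C = rho C + 1 := by
  have : Nonempty (Fin n) := ⟨⟨0, hn⟩⟩
  have h0 := hconv.zero_mem_interior_of_eq_neg hsymm hint
  have hA {s : ℝ} (hs : 0 < s) {X} (hX : IsPacking C X) (hcov : IsCovering (s • C) X) : 1 ≤ s :=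
    one_le_of_isPacking_of_isCovering hconv h0 hcpt.ne_univ hX hs.le hcov
  refine sInf_eq_sSup_add ⟨2, two_pos, ?_⟩ (fun s ⟨hs, X, hX, hcov⟩ => hA hs hX hcov)
    (fun r hr => hr.1.le) ?_ ?_
  · obtain ⟨X, hX⟩ := exists_maximal_isPacking C
    refine ⟨X, hX.prop, ?_⟩
    rw [← hconv.sub_self_eq_two_smul hsymm]
    exact isCovering_sub_self_of_maximal hX ⟨0, interior_subset h0⟩
  · rintro r ⟨-, hr⟩ s ⟨hs, X, hX, hcov⟩
    obtain ⟨y, hy⟩ := hr X hX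
    exact add_one_le_of_isCovering_of_disjoint hconv hsymm h0 (hA hs hX hcov) hcov hy
  · intro r hr hrB
    obtain ⟨X, hX, hhole⟩ : ∃ X, IsPacking C X ∧
        ∀ y, ∃ x ∈ X, ¬Disjoint (interior (r • C + {y})) (C + {x}) := by
      by_contra! h
      exact hrB ⟨hr, h⟩
    exact ⟨by linarith, X, hX, isCovering_add_one_smul_of_not_disjoint hconv hsymm hr.le hhole⟩
end
end

section
/- For every point x on the boundary of a two-dimensional centrally symmetric convex domain C, there exist points x₂, x₃, x₄, x₅, x₆ on the boundary of C such that x, x₂, x₃, x₄, x₅, x₆ are the six vertices (in order) of an affinely regular hexagon inscribed in C. -/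
/-!
Since `C` is symmetric, `0` is an interior point and the frontier of `C` is the unit sphere
`gauge C = 1`; being homeomorphic to a circle, it is connected. Along it the function
`y ↦ gauge C (y - x)` runs from `0` at `x` to `gauge C (-2x) = 2` at `-x`, so it takes the value
`1` at some `x₂`, i.e. `x₃ = x₂ - x` is a frontier point as well, and the other three vertices
are the reflections in the origin. Finally `x₂` cannot be a multiple `a • x`: `a ≥ 0` forces
`x₂ = x`, and `a < 0` gives `gauge C (x₂ - x) = 1 - a > 1`.
-/

open Set

theorem Convex.zero_mem_interior_of_neg_eq {E : Type*} [AddCommGroup E] [Module ℝ E]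
    [TopologicalSpace E] [IsTopologicalAddGroup E] [ContinuousConstSMul ℝ E] {s : Set E}
    (hs : Convex ℝ s) (hneg : -s = s) (hne : (interior s).Nonempty) : (0 : E) ∈ interior s := by
  obtain ⟨y, hy⟩ := hne
  have hint : -interior s = interior s := by
    rw [show -interior s = interior (-s) from (Homeomorph.neg E).preimage_interior s, hneg]
  have hy' : -y ∈ interior s := by rwa [← hint, neg_mem_neg]
  simpa using hs.interior.midpoint_mem hy hy'

theorem neg_mem_frontier_of_neg_eq {E : Type*} [AddGroup E] [TopologicalSpace E] [ContinuousNeg E]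
    {s : Set E} (hneg : -s = s) {x : E} (hx : x ∈ frontier s) : -x ∈ frontier s := by
  rwa [show frontier s = -frontier s by
    rw [show -frontier s = frontier (-s) from (Homeomorph.neg E).preimage_frontier s, hneg],
    neg_mem_neg]

theorem Convex.isConnected_frontier {E : Type*} [NormedAddCommGroup E] [NormedSpace ℝ E]
    (hE : 1 < Module.rank ℝ E) {s : Set E} (hs : Convex ℝ s) (hne : (interior s).Nonempty)
    (hb : Bornology.IsBounded s) : IsConnected (frontier s) := by
  obtain ⟨e, -, -, he⟩ := exists_homeomorph_image_interior_closure_frontier_eq_unitBall hs hne hb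
  rw [← e.preimage_image (frontier s), he, ← e.image_symm]
  exact (isConnected_sphere hE 0 zero_le_one).image _ e.symm.continuous.continuousOn

theorem exists_mem_frontier_sub_mem_frontier {E : Type*} [AddCommGroup E] [Module ℝ E]
    [TopologicalSpace E] [IsTopologicalAddGroup E] [ContinuousSMul ℝ E] {s : Set E}
    (hs : Convex ℝ s) (hs₀ : s ∈ nhds 0) (hfr : IsPreconnected (frontier s)) {x : E}
    (hx : x ∈ frontier s) (hx' : -x ∈ frontier s) : ∃ y ∈ frontier s, y - x ∈ frontier s := by
  have hgx : gauge s (-x) = 1 := (gauge_eq_one_iff_mem_frontier hs hs₀).2 hx'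
  have hcont : ContinuousOn (fun y ↦ gauge s (y - x)) (frontier s) :=
    ((continuous_gauge hs hs₀).comp (continuous_sub_right x)).continuousOn
  have h1 : (1 : ℝ) ∈ Icc (gauge s (x - x)) (gauge s (-x - x)) := by
    rw [sub_self, gauge_zero, ← neg_add', ← two_smul ℝ, ← smul_neg,
      gauge_smul_of_nonneg zero_le_two, hgx]
    norm_num
  obtain ⟨y, hy, hyx⟩ := hfr.intermediate_value hx hx' hcont h1
  exact ⟨y, hy, (gauge_eq_one_iff_mem_frontier hs hs₀).1 hyx⟩

theorem linearIndependent_of_gauge_eq_one {E : Type*} [AddCommGroup E] [Module ℝ E] {s : Set E}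
    {x y : E} (hx : gauge s x = 1) (hy : gauge s y = 1) (hyx : gauge s (y - x) = 1) :
    LinearIndependent ℝ ![x, y] := by
  rw [linearIndependent_fin2]
  refine ⟨?_, fun a hax ↦ ?_⟩
  · rintro rfl
    simp at hy
  · simp only [Matrix.cons_val_one, Matrix.cons_val_zero] at hax
    subst hax
    rcases le_or_gt 0 a with ha | ha
    · rw [gauge_smul_of_nonneg ha, hy, smul_eq_mul, mul_one] at hx
      subst hx
      simp at hyx
    · rw [show y - a • y = (1 - a) • y by rw [sub_smul, one_smul],
        gauge_smul_of_nonneg (by linarith), hy, smul_eq_mul, mul_one] at hyx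
      linarith

/-- For every boundary point `x` of a two-dimensional centrally symmetric convex domain `C`
there are five further boundary points `x₂, …, x₆` such that `x, x₂, x₃, x₄, x₅, x₆` are the
six vertices (in order) of an affinely regular hexagon inscribed in `C`; i.e.
`x₃ = x₂ - x`, `x₄ = -x`, `x₅ = -x₂`, `x₆ = -x₃`, and the hexagon is nondegenerate. -/
theorem inscribed_affinely_regular_hexagon (C : Set (ℝ × ℝ)) (hcpt : IsCompact C)
    (hconv : Convex ℝ C) (hint : (interior C).Nonempty) (hsymm : C = -C)
    (x : ℝ × ℝ) (hx : x ∈ frontier C) :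
    ∃ x₂ x₃ x₄ x₅ x₆ : ℝ × ℝ,
      x₂ ∈ frontier C ∧ x₃ ∈ frontier C ∧ x₄ ∈ frontier C ∧
      x₅ ∈ frontier C ∧ x₆ ∈ frontier C ∧
      x₃ = x₂ - x ∧ x₄ = -x ∧ x₅ = -x₂ ∧ x₆ = -x₃ ∧
      LinearIndependent ℝ ![x, x₂] := by
  have hneg_mem {z : ℝ × ℝ} : z ∈ frontier C → -z ∈ frontier C :=
    neg_mem_frontier_of_neg_eq hsymm.symm
  have h₀ : C ∈ nhds (0 : ℝ × ℝ) :=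
    mem_interior_iff_mem_nhds.1 (hconv.zero_mem_interior_of_neg_eq hsymm.symm hint)
  have hfr : IsConnected (frontier C) :=
    hconv.isConnected_frontier (by simp [one_add_one_eq_two]) hint hcpt.isBounded
  obtain ⟨x₂, hx₂, hx₃⟩ :=
    exists_mem_frontier_sub_mem_frontier hconv h₀ hfr.isPreconnected hx (hneg_mem hx)
  have hgauge {z : ℝ × ℝ} : z ∈ frontier C → gauge C z = 1 :=
    (gauge_eq_one_iff_mem_frontier hconv h₀).2
  exact ⟨x₂, x₂ - x, -x, -x₂, -(x₂ - x), hx₂, hx₃, hneg_mem hx, hneg_mem hx₂, hneg_mem hx₃,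
    rfl, rfl, rfl, rfl,
    linearIndependent_of_gauge_eq_one (hgauge hx) (hgauge hx₂) (hgauge hx₃)⟩
end

section
/- Let α = 2(2−√2). For all κ with α ≤ κ ≤ √2 and all λ with 1 ≤ λ ≤ α satisfying (4−3λ)/λ ≥ (α−1)/(1−½ακ), one has (4α/κ)·((α−1)/(κ−1) + 2α/κ + (4−3λ)/λ)⁻¹ ≤ α, with equality if and only if κ = 2/(3−√2) and λ = (2+4√2)/7. -/
/-!
Since `4α/κ = α · (4/κ)`, the claim says `4/κ ≤ D`, where `D` is the bracketed sum. Bounding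
`(4 - 3λ)/λ` from below by the constraint leaves a one-variable inequality in `κ`, whose gap
`kappaGap α κ` is a positive multiple of `(7κ - 6 - 2√2)²`. Equality therefore forces
`κ = 2/(3 - √2) = (6 + 2√2)/7` and makes the constraint tight, which determines `λ`.
-/

open Real

theorem two_mul_sqrt_two_lt_three : 2 * √2 < 3 := by
  nlinarith [sq_sqrt (zero_le_two : (0 : ℝ) ≤ 2), sqrt_nonneg 2]

theorem twentythree_lt_seventeen_mul_sqrt_two : 23 < 17 * √2 := by
  nlinarith [sq_sqrt (zero_le_two : (0 : ℝ) ≤ 2), sqrt_nonneg 2]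

theorem sqrt_two_pow_three : √2 ^ 3 = 2 * √2 := by
  rw [pow_succ, sq_sqrt zero_le_two, mul_comm]

theorem sqrt_two_pow_four : √2 ^ 4 = 4 := by
  rw [show 4 = 2 * 2 from rfl, pow_mul, sq_sqrt zero_le_two]
  norm_num

theorem two_div_three_sub_sqrt_two : 2 / (3 - √2) = (6 + 2 * √2) / 7 := by
  have h : 3 - √2 ≠ 0 := by linarith [two_mul_sqrt_two_lt_three, sqrt_nonneg 2]
  rw [div_eq_div_iff h (by norm_num)]
  linear_combination 2 * sq_sqrt (zero_le_two : (0 : ℝ) ≤ 2)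

theorem sub_mul_div_self_inj {a b x y : ℝ} (ha : a ≠ 0) (hx : x ≠ 0) (hy : y ≠ 0) :
    (a - b * x) / x = (a - b * y) / y ↔ x = y := by
  rw [div_eq_div_iff hx hy]
  refine ⟨fun h ↦ mul_left_cancel₀ ha (by linear_combination -h), fun h ↦ h ▸ rfl⟩

theorem mul_mul_inv_le_self_of_le {a x D : ℝ} (ha : 0 < a) (hx : 0 < x) (hxD : x ≤ D) :
    a * x * D⁻¹ ≤ a ∧ (a * x * D⁻¹ = a ↔ D = x) := by
  have hD : 0 < D := hx.trans_le hxD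
  have hxD' : x / D ≤ 1 := (div_le_one hD).2 hxD
  rw [mul_assoc, ← div_eq_mul_inv, mul_eq_left₀ ha.ne', div_eq_one_iff_eq hD.ne', eq_comm]
  exact ⟨mul_le_of_le_one_right ha.le hxD', Iff.rfl⟩

noncomputable def kappaGap (α κ : ℝ) : ℝ :=
  (α - 1) / (κ - 1) + (α - 1) / (1 - 1 / 2 * α * κ) - (4 - 2 * α) / κ

section kappaGap

variable {α κ : ℝ}

theorem kappaGap_eq (hα : α = 2 * (2 - √2)) (h₀ : κ ≠ 0) (h₁ : κ - 1 ≠ 0)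
    (h₂ : 1 - 1 / 2 * α * κ ≠ 0) :
    kappaGap α κ =
      (17 * √2 - 23) / 49 * (7 * κ - 6 - 2 * √2) ^ 2 / (κ * (κ - 1) * (1 - 1 / 2 * α * κ)) := by
  rw [kappaGap, div_add_div _ _ h₁ h₂, div_sub_div _ _ (mul_ne_zero h₁ h₂) h₀,
    div_eq_div_iff (mul_ne_zero (mul_ne_zero h₁ h₂) h₀) (mul_ne_zero (mul_ne_zero h₀ h₁) h₂), hα]
  ring_nf
  simp only [sq_sqrt zero_le_two, sqrt_two_pow_three, sqrt_two_pow_four]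
  ring

theorem kappaGap_nonneg (hα : α = 2 * (2 - √2)) (h₁ : 1 < κ) (h₂ : 0 < 1 - 1 / 2 * α * κ) :
    0 ≤ kappaGap α κ := by
  have hc : 0 ≤ (17 * √2 - 23) / 49 := by linarith [twentythree_lt_seventeen_mul_sqrt_two]
  have hden : 0 < κ * (κ - 1) * (1 - 1 / 2 * α * κ) :=
    mul_pos (mul_pos (by linarith) (by linarith)) h₂
  rw [kappaGap_eq hα (by linarith) (by linarith) h₂.ne']
  exact div_nonneg (mul_nonneg hc (sq_nonneg _)) hden.le

theorem kappaGap_eq_zero_iff (hα : α = 2 * (2 - √2)) (h₀ : κ ≠ 0) (h₁ : κ - 1 ≠ 0)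
    (h₂ : 1 - 1 / 2 * α * κ ≠ 0) :
    kappaGap α κ = 0 ↔ κ = 2 / (3 - √2) := by
  have hc : (17 * √2 - 23) / 49 ≠ 0 := by linarith [twentythree_lt_seventeen_mul_sqrt_two]
  rw [kappaGap_eq hα h₀ h₁ h₂, two_div_three_sub_sqrt_two]
  simp only [div_eq_zero_iff, mul_eq_zero, hc, h₀, h₁, h₂, pow_eq_zero_iff two_ne_zero,
    false_or, or_false]
  constructor <;> intro h <;> linarith

end kappaGap

theorem constraint_at_critical_kappa {α : ℝ} (hα : α = 2 * (2 - √2)) :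
    (α - 1) / (1 - 1 / 2 * α * (2 / (3 - √2))) =
      (4 - 3 * ((2 + 4 * √2) / 7)) / ((2 + 4 * √2) / 7) := by
  have h₃ : 3 - √2 ≠ 0 := by linarith [two_mul_sqrt_two_lt_three, sqrt_nonneg 2]
  have h₁ : √2 - 1 ≠ 0 := by linarith [twentythree_lt_seventeen_mul_sqrt_two]
  have hden : 1 - 1 / 2 * α * (2 / (3 - √2)) = (√2 - 1) / (3 - √2) := by
    rw [hα]
    field_simp
    ring
  rw [hden, hα]
  field_simp
  ring_nf
  simp only [sq_sqrt zero_le_two, sqrt_two_pow_three]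
  ring

theorem key_inequality_general (κ lam : ℝ) (α : ℝ) (hα : α = 2 * (2 - Real.sqrt 2))
    (hκ1 : α ≤ κ) (hκ2 : κ ≤ Real.sqrt 2) (hl1 : 1 ≤ lam)
    (hcon : (4 - 3 * lam) / lam ≥ (α - 1) / (1 - (1 / 2) * α * κ)) :
    (4 * α / κ) * ((α - 1) / (κ - 1) + 2 * α / κ + (4 - 3 * lam) / lam)⁻¹ ≤ α ∧
    ((4 * α / κ) * ((α - 1) / (κ - 1) + 2 * α / κ + (4 - 3 * lam) / lam)⁻¹ = α ↔
      κ = 2 / (3 - Real.sqrt 2) ∧ lam = (2 + 4 * Real.sqrt 2) / 7) := by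
  have hα₁ : 1 < α := by rw [hα]; linarith [two_mul_sqrt_two_lt_three]
  have hκ₁ : 1 < κ := hα₁.trans_le hκ1
  have hκ₀ : 0 < κ := one_pos.trans hκ₁
  have hden : 0 < 1 - 1 / 2 * α * κ := by
    have : α * κ ≤ α * √2 := mul_le_mul_of_nonneg_left hκ2 (by linarith)
    nlinarith [two_mul_sqrt_two_lt_three, sq_sqrt (zero_le_two : (0 : ℝ) ≤ 2)]
  have hlam : 0 < lam := by linarith
  have hgap := kappaGap_nonneg hα hκ₁ hden
  have hsplit : (α - 1) / (κ - 1) + 2 * α / κ + (4 - 3 * lam) / lam - 4 / κ =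
      kappaGap α κ + ((4 - 3 * lam) / lam - (α - 1) / (1 - 1 / 2 * α * κ)) := by
    rw [kappaGap]; ring
  obtain ⟨hle, heq⟩ := mul_mul_inv_le_self_of_le (a := α) (by linarith) (div_pos four_pos hκ₀)
    (show 4 / κ ≤ (α - 1) / (κ - 1) + 2 * α / κ + (4 - 3 * lam) / lam by linarith)
  rw [show 4 * α / κ = α * (4 / κ) by ring]
  refine ⟨hle, heq.trans ?_⟩
  rw [← sub_eq_zero, hsplit, add_eq_zero_iff_of_nonneg hgap (sub_nonneg.2 hcon),
    kappaGap_eq_zero_iff hα hκ₀.ne' (sub_pos.2 hκ₁).ne' hden.ne', sub_eq_zero]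
  refine and_congr_right fun hκ ↦ ?_
  rw [hκ, constraint_at_critical_kappa hα,
    sub_mul_div_self_inj four_ne_zero hlam.ne' (by positivity)]

/-- The key inequality in the proof of the optimal simultaneous packing-covering
bound, with its equality case. -/
theorem key_inequality (κ lam : ℝ) (α : ℝ) (hα : α = 2 * (2 - Real.sqrt 2))
    (hκ1 : α ≤ κ) (hκ2 : κ ≤ Real.sqrt 2) (hl1 : 1 ≤ lam) (hl2 : lam ≤ α)
    (hcon : (4 - 3 * lam) / lam ≥ (α - 1) / (1 - (1 / 2) * α * κ)) :
    (4 * α / κ) * ((α - 1) / (κ - 1) + 2 * α / κ + (4 - 3 * lam) / lam)⁻¹ ≤ α ∧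
    ((4 * α / κ) * ((α - 1) / (κ - 1) + 2 * α / κ + (4 - 3 * lam) / lam)⁻¹ = α ↔
      κ = 2 / (3 - Real.sqrt 2) ∧ lam = (2 + 4 * Real.sqrt 2) / 7) :=
  key_inequality_general κ lam α hα hκ1 hκ2 hl1 hcon
end

section
/- With u₂ = (√3κ/(4α), κ(α−1)/(4(κ−1)α) + 1/2) and the line through v₂ = (√3/2, 1/2) and m₁* = (√3κ/2, 0) given by y = (x − (√3/2)κ)/(√3(1−κ)), the intersection u₂⋆ of the line through the origin and u₂ with this line has x-coordinate √3κ²/(2α(3κ−2)), and hence ‖u₂⋆‖/‖u₂‖ = 2κ/(3κ−2). -/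
/-! The point `u₂⋆` is `c • u₂` with `c = 2κ/(3κ−2)`, the unique scale putting `c • u₂` on the
line; its x-coordinate is then read off directly, and since `u₂⋆` lies on the ray through `u₂`,
the ratio of norms is the scale `c` itself. -/

theorem norm_smul_div_norm_of_nonneg {E : Type*} [NormedAddCommGroup E] [NormedSpace ℝ E]
    {c : ℝ} (hc : 0 ≤ c) {u : E} (hu : u ≠ 0) : ‖c • u‖ / ‖u‖ = c := by
  rw [norm_smul, Real.norm_of_nonneg hc, mul_div_assoc, div_self (norm_ne_zero_iff.mpr hu),
    mul_one]

namespace U2Star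

noncomputable def u₂ (κ α : ℝ) : ℝ × ℝ :=
  (Real.sqrt 3 * κ / (4 * α), κ * (α - 1) / (4 * (κ - 1) * α) + 1 / 2)

noncomputable def scale (κ : ℝ) : ℝ := 2 * κ / (3 * κ - 2)

variable {κ α : ℝ}

theorem scale_pos (hκ : 1 < κ) : 0 < scale κ :=
  div_pos (by linarith) (by linarith)

theorem u₂_ne_zero (hκ : 1 < κ) (hα : 0 < α) : u₂ κ α ≠ 0 := by
  intro h
  have hfst : Real.sqrt 3 * κ / (4 * α) = 0 := congrArg Prod.fst h
  have : 0 < Real.sqrt 3 * κ / (4 * α) := by positivity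
  exact this.ne' hfst

theorem smul_u₂_fst (hκ : 1 < κ) (hα : 0 < α) :
    (scale κ • u₂ κ α).1 = Real.sqrt 3 * κ ^ 2 / (2 * α * (3 * κ - 2)) := by
  have h3κ : 3 * κ - 2 ≠ 0 := by linarith
  simp only [scale, u₂, Prod.smul_fst, smul_eq_mul]
  field_simp
  ring

theorem smul_u₂_mem_line (hκ : 1 < κ) (hα : 0 < α) :
    (scale κ • u₂ κ α).2
      = ((scale κ • u₂ κ α).1 - Real.sqrt 3 / 2 * κ) / (Real.sqrt 3 * (1 - κ)) := by
  have h3κ : κ * 3 - 2 ≠ 0 := by linarith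
  have hκ1 : κ - 1 ≠ 0 := by linarith
  have h1κ : 1 - κ ≠ 0 := by linarith
  simp only [scale, u₂, Prod.smul_fst, Prod.smul_snd, smul_eq_mul]
  field_simp
  ring

end U2Star

open U2Star in
/-- Coordinate computation for (15): with `u₂ = (√3κ/(4α), κ(α−1)/(4(κ−1)α) + 1/2)`,
the intersection `u₂⋆` of the line through the origin and `u₂` with the line
`y = (x − (√3/2)κ)/(√3(1−κ))` has x-coordinate `√3κ²/(2α(3κ−2))`, and
`‖u₂⋆‖/‖u₂‖ = 2κ/(3κ−2)`. -/
theorem u2star2_ratio (κ α : ℝ) (hκ : 1 < κ) (hα : 0 < α) :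
    ∃ u₂star : ℝ × ℝ, (∃ c : ℝ, 0 < c ∧
        u₂star = c • ((Real.sqrt 3 * κ / (4 * α),
          κ * (α - 1) / (4 * (κ - 1) * α) + 1 / 2) : ℝ × ℝ)) ∧
      u₂star.2 = (u₂star.1 - Real.sqrt 3 / 2 * κ) / (Real.sqrt 3 * (1 - κ)) ∧
      u₂star.1 = Real.sqrt 3 * κ ^ 2 / (2 * α * (3 * κ - 2)) ∧
      ‖u₂star‖ / ‖((Real.sqrt 3 * κ / (4 * α),
          κ * (α - 1) / (4 * (κ - 1) * α) + 1 / 2) : ℝ × ℝ)‖ = 2 * κ / (3 * κ - 2) := by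
  exact ⟨scale κ • u₂ κ α, ⟨scale κ, scale_pos hκ, rfl⟩, smul_u₂_mem_line hκ hα,
    smul_u₂_fst hκ hα, norm_smul_div_norm_of_nonneg (scale_pos hκ).le (u₂_ne_zero hκ hα)⟩
end
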